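/- For b < 1 in an MV-algebra, the set F_b = {x : x ∨ b = 1} is a proper implication filter: it contains 1, not 0, is upward closed, closed under meets, and closed under powers. -/

import Mathlib

/-- An MV-algebra `(α, ⊕, ¬, 0)` with the standard axioms. -/
class MV (α : Type*) extends Add α, Neg α, Zero α where
  add_assoc : ∀ a b c : α, a + (b + c) = (a + b) + c
  add_comm : ∀ a b : α, a + b = b + a
  add_zero : ∀ a : α, a + 0 = a
  neg_neg : ∀ a : α, - -a = a
  add_neg_zero : ∀ a : α, a + -(0 : α) = -(0 : α)
  luk : ∀ a b : α, -(-a + b) + b = -(-b + a) + a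

namespace MV

variable {α : Type*} [MV α]

/-- The top element `1 = ¬0`. -/
def one (α : Type*) [MV α] : α := -(0 : α)

/-- Implication `x → y = ¬x ⊕ y`. -/
def imp (a b : α) : α := -a + b

/-- Strong conjunction `x ⊗ y = ¬(¬x ⊕ ¬y)`. -/
def otimes (a b : α) : α := -(-a + -b)

/-- Join `x ∨ y = (x → y) → y`. -/
def sup (a b : α) : α := imp (imp a b) b

/-- Meet `x ∧ y = ¬(¬x ∨ ¬y)`. -/
def inf (a b : α) : α := -(sup (-a) (-b))

/-- Order: `x ≤ y` iff `x → y = 1`. -/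
def le (a b : α) : Prop := imp a b = one α

/-- Strict order. -/
def lt (a b : α) : Prop := le a b ∧ a ≠ b

/-- `n`-fold `⊗`-power. -/
def pow (a : α) : ℕ → α
  | 0 => one α
  | n + 1 => otimes a (pow a n)

/-- An implication filter: a lattice filter closed under `⊗`. -/
def IsImpFilter (F : Set α) : Prop :=
  one α ∈ F ∧ (∀ x ∈ F, ∀ y : α, le x y → y ∈ F) ∧
    (∀ x ∈ F, ∀ y ∈ F, inf x y ∈ F) ∧ (∀ x ∈ F, ∀ y ∈ F, otimes x y ∈ F)

/-- A prime implication filter: proper and `x ∨ y ∈ F → x ∈ F ∨ y ∈ F`. -/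
def IsPrime (F : Set α) : Prop :=
  IsImpFilter F ∧ F ≠ Set.univ ∧ ∀ x y : α, sup x y ∈ F → x ∈ F ∨ y ∈ F

/-- A minimal prime implication filter. -/
def IsMinimalPrime (F : Set α) : Prop :=
  IsPrime F ∧ ∀ G : Set α, IsPrime G → G ⊆ F → G = F

/-- A maximal proper implication filter. -/
def IsMaximal (F : Set α) : Prop :=
  IsImpFilter F ∧ F ≠ Set.univ ∧
    ∀ G : Set α, IsImpFilter G → G ≠ Set.univ → F ⊆ G → G = F

/-- A counit: `u < 1` joining to `1` with some `v < 1`. -/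
def IsCounit (u : α) : Prop :=
  lt u (one α) ∧ ∃ v : α, lt v (one α) ∧ sup u v = one α

/-- The implication filter generated by a set. -/
def gen (S : Set α) : Set α := ⋂₀ {F : Set α | IsImpFilter F ∧ S ⊆ F}

/-- The Conrad filter: the implication filter generated by all counits. -/
def conrad (α : Type*) [MV α] : Set α := gen {u : α | IsCounit u}

/-- The localizing filter `ℓ(P)`, generated by `{x → p : p ∈ P, x ∉ P}`. -/
def locFilter (P : Set α) : Set α :=
  gen {z : α | ∃ x : α, x ∉ P ∧ ∃ p ∈ P, z = imp x p}

end MV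

open MV

/-! `x ∨ b = ((x → b) → b)` equals `1` exactly when `x → b ≤ b`. The map `x ↦ x → b` is antitone
and turns `⊗` into iterated implication, `(x ⊗ y) → b = x → (y → b)`, so the condition
`x → b ≤ b` passes to larger elements and to `⊗`-products; meets and powers follow because
`x ⊗ y ≤ x ∧ y`. Finally `0 ∨ b = b`, which is not `1`. -/

namespace MV

variable {α : Type*} [MV α]

theorem zero_add (a : α) : 0 + a = a := by rw [MV.add_comm, MV.add_zero]

theorem add_one (a : α) : a + one α = one α := MV.add_neg_zero a

theorem one_add (a : α) : one α + a = one α := by rw [MV.add_comm, add_one]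

theorem neg_one : -(one α) = 0 := MV.neg_neg 0

theorem neg_add_self (a : α) : -a + a = one α := by
  have h := MV.luk a (one α)
  rwa [add_one, neg_one, zero_add, eq_comm] at h

theorem le_iff_exists_add {a b : α} : le a b ↔ ∃ c, b = a + c := by
  constructor
  · intro h
    refine ⟨-(-b + a), ?_⟩
    have h_luk := MV.luk a b
    rw [show -a + b = one α from h, neg_one, zero_add] at h_luk
    exact h_luk.trans (MV.add_comm _ _)
  · rintro ⟨c, rfl⟩
    show -a + (a + c) = one α
    rw [MV.add_assoc, neg_add_self, one_add]

theorem le_add_right (a c : α) : le a (a + c) := le_iff_exists_add.2 ⟨c, rfl⟩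

theorem le_trans {a b c : α} (hab : le a b) (hbc : le b c) : le a c := by
  obtain ⟨u, rfl⟩ := le_iff_exists_add.1 hab
  obtain ⟨v, rfl⟩ := le_iff_exists_add.1 hbc
  exact le_iff_exists_add.2 ⟨u + v, (MV.add_assoc a u v).symm⟩

theorem add_le_add_left {a b : α} (c : α) (h : le a b) : le (c + a) (c + b) := by
  obtain ⟨u, rfl⟩ := le_iff_exists_add.1 h
  exact le_iff_exists_add.2 ⟨u, MV.add_assoc c a u⟩

theorem add_le_add_right {a b : α} (c : α) (h : le a b) : le (a + c) (b + c) := by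
  rw [MV.add_comm a c, MV.add_comm b c]
  exact add_le_add_left c h

theorem neg_le_neg {a b : α} (h : le a b) : le (-b) (-a) := by
  show - -b + -a = one α
  rw [MV.neg_neg, MV.add_comm]
  exact h

theorem imp_le_imp_of_le {x y : α} (b : α) (h : le x y) : le (imp y b) (imp x b) :=
  add_le_add_right b (neg_le_neg h)

theorem imp_le_imp_right (x : α) {b c : α} (h : le b c) : le (imp x b) (imp x c) :=
  add_le_add_left (-x) h

theorem otimes_imp (x y b : α) : imp (otimes x y) b = imp x (imp y b) := by
  show - -(-x + -y) + b = -x + (-y + b)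
  rw [MV.neg_neg, MV.add_assoc]

theorem otimes_le_inf (x y : α) : le (otimes x y) (inf x y) := by
  -- `x ∧ y = ¬(¬(x ⊕ ¬y) ⊕ ¬y)` and `¬(x ⊕ ¬y) ≤ ¬x`
  show le (-(-x + -y)) (-(-(- -x + -y) + -y))
  rw [MV.neg_neg]
  exact neg_le_neg (add_le_add_right (-y) (neg_le_neg (le_add_right x (-y))))

theorem sup_eq_one_iff {x b : α} : sup x b = one α ↔ le (imp x b) b := Iff.rfl

theorem one_sup (b : α) : sup (one α) b = one α := by
  show -(-(one α) + b) + b = one α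
  rw [neg_one, zero_add, neg_add_self]

theorem zero_sup (b : α) : sup 0 b = b := by
  show -(-(0 : α) + b) + b = b
  rw [show -(0 : α) + b = one α from one_add b, neg_one, zero_add]

section SupEqOne

variable {b : α}

theorem sup_eq_one_of_le {x y : α} (hx : sup x b = one α) (hxy : le x y) : sup y b = one α :=
  le_trans (imp_le_imp_of_le b hxy) hx

theorem otimes_sup_eq_one {x y : α} (hx : sup x b = one α) (hy : sup y b = one α) :
    sup (otimes x y) b = one α := by
  rw [sup_eq_one_iff, otimes_imp]
  exact le_trans (imp_le_imp_right x hy) hx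

theorem inf_sup_eq_one {x y : α} (hx : sup x b = one α) (hy : sup y b = one α) :
    sup (inf x y) b = one α :=
  sup_eq_one_of_le (otimes_sup_eq_one hx hy) (otimes_le_inf x y)

theorem pow_sup_eq_one {x : α} (hx : sup x b = one α) : ∀ n : ℕ, sup (pow x n) b = one α
  | 0 => one_sup b
  | n + 1 => otimes_sup_eq_one hx (pow_sup_eq_one hx n)

end SupEqOne

end MV

/-- For `b < 1`, `F_b = {x : x ∨ b = 1}` is a proper implication filter. -/
theorem Fb_is_proper_implication_filter {α : Type*} [MV α] (b : α) (hb : lt b (one α)) :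
    one α ∈ {x : α | sup x b = one α} ∧
    (0 : α) ∉ {x : α | sup x b = one α} ∧
    (∀ x ∈ {x : α | sup x b = one α}, ∀ y : α, le x y → y ∈ {x : α | sup x b = one α}) ∧
    (∀ x ∈ {x : α | sup x b = one α}, ∀ y ∈ {x : α | sup x b = one α},
      inf x y ∈ {x : α | sup x b = one α}) ∧
    (∀ x ∈ {x : α | sup x b = one α}, ∀ n : ℕ, pow x n ∈ {x : α | sup x b = one α}) := by
  exact ⟨one_sup b, fun h => hb.2 ((zero_sup b).symm.trans h),
    fun _ hx _ hxy => sup_eq_one_of_le hx hxy, fun _ hx _ hy => inf_sup_eq_one hx hy,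
    fun _ hx n => pow_sup_eq_one hx n⟩
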